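/- For every compact set K ⊆ {t ∈ ℂ : Re(t) > 0} there exists a constant C > 0 such that for every integer n ≥ 1 and every t ∈ K: |χ(nt) − χ((n+1)t)| ≤ C/n. -/

import Mathlib

open Complex Set Filter MeasureTheory

/-- `μ = (R - √(R²-4))/2`. -/
noncomputable def mu (R : ℝ) : ℝ := (R - Real.sqrt (R ^ 2 - 4)) / 2

/-- The Möbius transformation `λ(z) = (z - μ)/(μz - 1)`. -/
noncomputable def lam (R : ℝ) (z : ℂ) : ℂ := (z - (mu R : ℂ)) / ((mu R : ℂ) * z - 1)

/-- The shifted Zhukovsky-type map `ψ(w) = Rw - 1 + 1/(Rw - 1)`. -/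
noncomputable def psi (R : ℝ) (w : ℂ) : ℂ := (R : ℂ) * w - 1 + ((R : ℂ) * w - 1)⁻¹

/-- `χ(t) = t ∑_{k ∈ ℤ} μ^{4k} exp((μ - 1/μ) μ^{4k} t)`. -/
noncomputable def chi (R : ℝ) (t : ℂ) : ℂ :=
  t * ∑' k : ℤ, (mu R : ℂ) ^ (4 * k) *
    Complex.exp (((mu R : ℂ) - (mu R : ℂ)⁻¹) * (mu R : ℂ) ^ (4 * k) * t)

/-- The region `D = {t : |t - 1/R| < 1/R, Re t > Rμ²/2}`. -/
def Dset (R : ℝ) : Set ℂ :=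
  {t | ‖t - 1 / (R : ℂ)‖ < 1 / R ∧ R * (mu R) ^ 2 / 2 < t.re}

/-- The region `𝔇 = {w : |w - R/(R²-1)| > 1/(R²-1), |w| < 1}`. -/
def frakD (R : ℝ) : Set ℂ :=
  {w | 1 / (R ^ 2 - 1) < ‖w - (R : ℂ) / (((R : ℝ) ^ 2 - 1 : ℝ) : ℂ)‖ ∧
    ‖w‖ < 1}

/-- The orthogonality domain `G₁ = ψ(𝔇)`. -/
noncomputable def G1 (R : ℝ) : Set ℂ := psi R '' frakD R

/-- `p` is the sequence of Carleman (Bergman) orthonormal polynomials of `G₁`: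
`p n` has degree `n`, real positive leading coefficient, and
`(1/π) ∫_{G₁} pₙ conj(pₘ) dA = δ_{n,m}`. -/
def IsCarleman (R : ℝ) (p : ℕ → Polynomial ℂ) : Prop :=
  (∀ n, (p n).natDegree = n) ∧
  (∀ n, 0 < (p n).leadingCoeff.re ∧ (p n).leadingCoeff.im = 0) ∧
  (∀ n m, ∫ z in G1 R, (p n).eval z * (starRingEnd ℂ) ((p m).eval z) =
      if n = m then (Real.pi : ℂ) else 0)

/-- The limit functions `f_q` of Theorem 1.1. -/
noncomputable def fq (R q : ℝ) (t : ℂ) : ℂ :=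
  (1 - (mu R : ℂ) * t) ^ 2 * (1 - (mu R : ℂ) ^ 3 / t) ^ 2 / ((1 - (mu R : ℂ) ^ 4) * R) *
    ((chi R ((((mu R) ^ (4 * q) : ℝ) : ℂ) * t) -
        chi R ((((mu R) ^ (4 * q + 2) : ℝ) : ℂ) / t)) /
      (t - (mu R : ℂ) ^ 2 / t))

/-- `Gₙ(t) = μ^{-n} λ(t)ⁿ λ'(t)`. -/
noncomputable def Gfun (R : ℝ) (n : ℕ) (t : ℂ) : ℂ :=
  ((mu R : ℂ) ^ n)⁻¹ * (lam R t) ^ n * deriv (lam R) t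

/-!
With `c = μ⁻¹ - μ > 0` and `m = μ⁴ < 1` we have `χ(s) = c⁻¹ ∑_{k ∈ ℤ} g(c mᵏ s)` for
`g(z) = z e^{-z}`. A compact subset of the right half-plane lies in a cone `δ‖t‖ ≤ Re t`, and
for `a` in that cone `‖g(na) - g((n+1)a)‖ ≤ B(δ) min(r, 1/r) / n` with `r = n‖a‖`: the difference
is `O(r + r²)/n` times `e^{-δr}`. For `a = c mᵏ t` the values `r` run through a geometric
progression `q mᵏ`, and `∑ₖ min(q mᵏ, (q mᵏ)⁻¹)` is bounded independently of `q`.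
-/

lemma exp_neg_mul_mul_le_min {δ r : ℝ} (hδ : 0 < δ) (hr : 0 ≤ r) :
    Real.exp (-(δ * r)) * (r * (1 + 4 * r)) ≤ (5 + 30 / δ ^ 3) * min r r⁻¹ := by
  rcases le_total r 1 with hr1 | hr1
  · have hexp : Real.exp (-(δ * r)) ≤ 1 := Real.exp_le_one_iff.mpr (by nlinarith)
    rcases hr.eq_or_lt with rfl | hr0
    · simp
    rw [min_eq_left (hr1.trans (one_le_inv₀ hr0 |>.mpr hr1))]
    calc Real.exp (-(δ * r)) * (r * (1 + 4 * r)) ≤ 1 * (r * 5) := by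
          gcongr; linarith
      _ ≤ (5 + 30 / δ ^ 3) * r := by nlinarith [show 0 ≤ 30 / δ ^ 3 by positivity]
  · have hr0 : 0 < r := by linarith
    rw [min_eq_right ((inv_le_one_of_one_le₀ hr1).trans hr1)]
    have hcube : (δ * r) ^ 3 / 6 ≤ Real.exp (δ * r) := by
      simpa [Nat.factorial] using Real.pow_div_factorial_le_exp (δ * r) (by positivity) 3
    have hdecay : Real.exp (-(δ * r)) * r ^ 3 ≤ 6 / δ ^ 3 := by
      rw [Real.exp_neg, inv_mul_le_iff₀ (Real.exp_pos _), ← mul_div_assoc,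
        le_div_iff₀ (by positivity)]
      rw [div_le_iff₀ (by norm_num)] at hcube
      linarith [mul_pow δ r 3]
    calc Real.exp (-(δ * r)) * (r * (1 + 4 * r)) ≤ Real.exp (-(δ * r)) * (5 * r ^ 2) :=
          mul_le_mul_of_nonneg_left (by nlinarith) (Real.exp_pos _).le
      _ = 5 * (Real.exp (-(δ * r)) * r ^ 3) * r⁻¹ := by field_simp
      _ ≤ 5 * (6 / δ ^ 3) * r⁻¹ := by gcongr
      _ ≤ (5 + 30 / δ ^ 3) * r⁻¹ := by
          gcongr; linarith [show 5 * (6 / δ ^ 3) = 30 / δ ^ 3 by ring]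

lemma exists_zpow_mul_mem_Icc {m q : ℝ} (hm0 : 0 < m) (hm1 : m < 1) (hq : 0 < q) :
    ∃ k₀ : ℤ, q * m ^ k₀ ∈ Set.Icc m 1 := by
  obtain ⟨n, h1, h2⟩ := exists_mem_Ico_zpow hq (one_lt_inv₀ hm0 |>.mpr hm1)
  rw [inv_zpow, inv_le_iff_one_le_mul₀ (zpow_pos hm0 n)] at h1
  rw [inv_zpow] at h2
  refine ⟨n + 1, ?_, ?_⟩
  · rw [zpow_add_one₀ hm0.ne', ← mul_assoc]
    nlinarith
  · calc q * m ^ (n + 1) ≤ (m ^ (n + 1))⁻¹ * m ^ (n + 1) :=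
          mul_le_mul_of_nonneg_right h2.le (zpow_pos hm0 _).le
      _ = 1 := inv_mul_cancel₀ (zpow_pos hm0 _).ne'

lemma min_zpow_le_of_mem_Icc {m s : ℝ} (hm0 : 0 < m) (hs : s ∈ Set.Icc m 1) (j : ℤ) :
    min (s * m ^ j) (s * m ^ j)⁻¹ ≤ m⁻¹ * m ^ j.natAbs := by
  have hs0 : 0 < s := hm0.trans_le hs.1
  have hm1 : 1 ≤ m⁻¹ := one_le_inv₀ hm0 |>.mpr (hs.1.trans hs.2)
  rcases le_total 0 j with hj | hj
  · calc min (s * m ^ j) (s * m ^ j)⁻¹ ≤ 1 * m ^ j :=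
          (min_le_left _ _).trans (mul_le_mul_of_nonneg_right hs.2 (zpow_pos hm0 j).le)
      _ ≤ m⁻¹ * m ^ j.natAbs := by
          rw [← Int.natAbs_of_nonneg hj, zpow_natCast]
          exact mul_le_mul_of_nonneg_right hm1 (by positivity)
  · calc min (s * m ^ j) (s * m ^ j)⁻¹ ≤ s⁻¹ * (m ^ j)⁻¹ :=
          (min_le_right _ _).trans_eq (mul_inv _ _)
      _ ≤ m⁻¹ * m ^ j.natAbs := by
          rw [← zpow_neg, ← Int.ofNat_natAbs_of_nonpos hj, zpow_natCast]
          gcongr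
          exact hs.1

lemma hasSum_pow_natAbs {m : ℝ} (hm0 : 0 ≤ m) (hm1 : m < 1) :
    HasSum (fun k : ℤ => m ^ k.natAbs) ((1 + m) / (1 - m)) := by
  have hgeom := hasSum_geometric_of_lt_one hm0 hm1
  have hneg : HasSum (fun n : ℕ => m ^ (-((n : ℤ) + 1)).natAbs) (m * (1 - m)⁻¹) := by
    have hfun : (fun n : ℕ => m ^ (-((n : ℤ) + 1)).natAbs) = fun n => m * m ^ n := by
      funext n
      rw [show (-((n : ℤ) + 1)).natAbs = n + 1 by omega, pow_succ']
    exact hfun ▸ hgeom.mul_left m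
  convert HasSum.of_nat_of_neg_add_one (f := fun k : ℤ => m ^ k.natAbs) (by simpa using hgeom)
    hneg using 1
  field_simp [(sub_pos.mpr hm1).ne']

theorem summable_and_norm_tsum_le_of_norm_le_min {E : Type*} [NormedAddCommGroup E]
    [CompleteSpace E] {m q B : ℝ} (hm0 : 0 < m) (hm1 : m < 1) (hq : 0 < q) (hB : 0 ≤ B)
    {f : ℤ → E} (hf : ∀ k, ‖f k‖ ≤ B * min (q * m ^ k) (q * m ^ k)⁻¹) :
    Summable f ∧ ‖∑' k, f k‖ ≤ B * (m⁻¹ * ((1 + m) / (1 - m))) := by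
  obtain ⟨k₀, hk₀⟩ := exists_zpow_mul_mem_Icc hm0 hm1 hq
  have hgeom : HasSum (fun k : ℤ => B * (m⁻¹ * m ^ (k - k₀).natAbs))
      (B * (m⁻¹ * ((1 + m) / (1 - m)))) :=
    (((Equiv.subRight k₀).hasSum_iff.mpr (hasSum_pow_natAbs hm0.le hm1)).mul_left
      m⁻¹).mul_left B
  have hbound (k : ℤ) : ‖f k‖ ≤ B * (m⁻¹ * m ^ (k - k₀).natAbs) := by
    refine (hf k).trans (mul_le_mul_of_nonneg_left ?_ hB)
    have hsplit : q * m ^ k = q * m ^ k₀ * m ^ (k - k₀) := by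
      rw [mul_assoc, ← zpow_add₀ hm0.ne', add_sub_cancel]
    rw [hsplit]
    exact min_zpow_le_of_mem_Icc hm0 hk₀ (k - k₀)
  exact ⟨.of_norm_bounded hgeom.summable hbound, tsum_of_norm_bounded hgeom hbound⟩

lemma IsCompact.exists_pos_mul_norm_le_re {K : Set ℂ} (hKc : IsCompact K)
    (hK : K ⊆ {t : ℂ | 0 < t.re}) : ∃ δ > 0, ∀ t ∈ K, δ * ‖t‖ ≤ t.re := by
  rcases K.eq_empty_or_nonempty with rfl | hKne
  · exact ⟨1, one_pos, by simp⟩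
  have hnorm {t : ℂ} (ht : t ∈ K) : 0 < ‖t‖ := norm_pos_iff.mpr fun h => by simpa [h] using hK ht
  have hcont : ContinuousOn (fun t : ℂ => t.re / ‖t‖) K :=
    Complex.continuous_re.continuousOn.div continuous_norm.continuousOn fun t ht => (hnorm ht).ne'
  obtain ⟨t₀, ht₀, hmin⟩ := hKc.exists_isMinOn hKne hcont
  exact ⟨t₀.re / ‖t₀‖, div_pos (hK ht₀) (hnorm ht₀), fun t ht =>
    (le_div_iff₀ (hnorm ht)).mp (hmin ht)⟩

noncomputable def mulExpNeg (z : ℂ) : ℂ := z * cexp (-z)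

lemma norm_one_sub_exp_neg_le {a : ℂ} (ha : 0 ≤ a.re) : ‖1 - cexp (-a)‖ ≤ 2 * ‖a‖ := by
  rcases le_total ‖a‖ 1 with h | h
  · rw [norm_sub_rev, ← norm_neg a]
    exact Complex.norm_exp_sub_one_le (by rwa [norm_neg])
  · have hexp : ‖cexp (-a)‖ ≤ 1 := by
      rw [Complex.norm_exp, Complex.neg_re, Real.exp_le_one_iff]
      linarith
    calc ‖1 - cexp (-a)‖ ≤ ‖(1 : ℂ)‖ + ‖cexp (-a)‖ := norm_sub_le _ _
      _ ≤ 2 * ‖a‖ := by rw [norm_one]; linarith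

lemma norm_mulExpNeg_sub_add_le {z a : ℂ} (ha : 0 ≤ a.re) :
    ‖mulExpNeg z - mulExpNeg (z + a)‖ ≤ Real.exp (-z.re) * (‖a‖ + ‖z + a‖ * (2 * ‖a‖)) := by
  have hid : mulExpNeg z - mulExpNeg (z + a) = cexp (-z) * (-a + (z + a) * (1 - cexp (-a))) := by
    rw [mulExpNeg, mulExpNeg, neg_add, Complex.exp_add]
    ring
  rw [hid, norm_mul, Complex.norm_exp, Complex.neg_re]
  gcongr
  calc ‖-a + (z + a) * (1 - cexp (-a))‖ ≤ ‖-a‖ + ‖(z + a) * (1 - cexp (-a))‖ := norm_add_le _ _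
    _ ≤ ‖a‖ + ‖z + a‖ * (2 * ‖a‖) := by
        rw [norm_neg, norm_mul]
        gcongr
        exact norm_one_sub_exp_neg_le ha

lemma norm_mulExpNeg_le {δ : ℝ} {a : ℂ} (hδ : 0 < δ) (ha : δ * ‖a‖ ≤ a.re) :
    ‖mulExpNeg a‖ ≤ (5 + 30 / δ ^ 3) * min ‖a‖ ‖a‖⁻¹ := by
  refine le_trans ?_ (exp_neg_mul_mul_le_min hδ (norm_nonneg a))
  rw [mulExpNeg, norm_mul, Complex.norm_exp, Complex.neg_re, mul_comm]
  gcongr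
  nlinarith [norm_nonneg a]

lemma norm_mulExpNeg_nat_mul_sub_le {δ : ℝ} {a : ℂ} (hδ : 0 < δ) (ha : δ * ‖a‖ ≤ a.re)
    {n : ℕ} (hn : 1 ≤ n) :
    ‖mulExpNeg (n * a) - mulExpNeg ((n + 1) * a)‖ ≤
      (5 + 30 / δ ^ 3) / n * min (n * ‖a‖) (n * ‖a‖)⁻¹ := by
  have hn0 : (0 : ℝ) < n := by exact_mod_cast hn
  have hn1 : (1 : ℝ) ≤ n := by exact_mod_cast hn
  have hre : 0 ≤ a.re := le_trans (by positivity) ha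
  have hnorm : ‖(n : ℂ) * a + a‖ ≤ 2 * (n * ‖a‖) := by
    have hn1' : ‖(n : ℂ) + 1‖ = n + 1 := by exact_mod_cast Complex.norm_natCast (n + 1)
    rw [← add_one_mul, norm_mul, hn1']
    nlinarith [norm_nonneg a]
  have hdecay : δ * (n * ‖a‖) ≤ ((n : ℂ) * a).re := by
    rw [show ((n : ℂ) * a).re = n * a.re by simp]
    nlinarith
  rw [add_one_mul, div_mul_eq_mul_div, le_div_iff₀ hn0]
  calc ‖mulExpNeg (n * a) - mulExpNeg (n * a + a)‖ * n
      ≤ Real.exp (-((n : ℂ) * a).re) * (‖a‖ + ‖(n : ℂ) * a + a‖ * (2 * ‖a‖)) * n := by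
        gcongr; exact norm_mulExpNeg_sub_add_le hre
    _ ≤ Real.exp (-(δ * (n * ‖a‖))) * ((n * ‖a‖) * (1 + 4 * (n * ‖a‖))) := by
        rw [mul_assoc]
        refine mul_le_mul (Real.exp_le_exp.mpr (by linarith)) ?_ (by positivity)
          (Real.exp_pos _).le
        nlinarith [mul_le_mul_of_nonneg_left hnorm (by positivity : (0 : ℝ) ≤ 2 * n * ‖a‖)]
    _ ≤ (5 + 30 / δ ^ 3) * min (n * ‖a‖) (n * ‖a‖)⁻¹ :=
        exp_neg_mul_mul_le_min hδ (by positivity)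

lemma mul_norm_ofReal_mul_le_re {δ x : ℝ} {s : ℂ} (hx : 0 ≤ x) (hs : δ * ‖s‖ ≤ s.re) :
    δ * ‖(x : ℂ) * s‖ ≤ ((x : ℂ) * s).re := by
  rw [norm_mul, Complex.norm_real, Real.norm_of_nonneg hx, Complex.re_ofReal_mul]
  nlinarith

noncomputable def lacunarySum (c m : ℝ) (s : ℂ) : ℂ :=
  ∑' k : ℤ, mulExpNeg ((c * m ^ k : ℝ) * s)

section lacunarySum

variable {c m δ : ℝ} {s : ℂ}

lemma norm_ofReal_mul_zpow_mul (hc : 0 < c) (hm0 : 0 < m) (k : ℤ) :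
    ‖((c * m ^ k : ℝ) : ℂ) * s‖ = c * ‖s‖ * m ^ k := by
  rw [norm_mul, Complex.norm_real, Real.norm_of_nonneg (by positivity)]
  ring

lemma summable_mulExpNeg_zpow (hc : 0 < c) (hm0 : 0 < m) (hm1 : m < 1) (hδ : 0 < δ)
    (hs : δ * ‖s‖ ≤ s.re) (hs0 : s ≠ 0) :
    Summable fun k : ℤ => mulExpNeg ((c * m ^ k : ℝ) * s) := by
  refine (summable_and_norm_tsum_le_of_norm_le_min hm0 hm1 (q := c * ‖s‖)
    (B := 5 + 30 / δ ^ 3) (by positivity) (by positivity) fun k => ?_).1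
  rw [← norm_ofReal_mul_zpow_mul hc hm0]
  exact norm_mulExpNeg_le hδ (mul_norm_ofReal_mul_le_re (by positivity) hs)

lemma norm_lacunarySum_sub_le (hc : 0 < c) (hm0 : 0 < m) (hm1 : m < 1) (hδ : 0 < δ)
    (hs : δ * ‖s‖ ≤ s.re) (hs0 : s ≠ 0) {n : ℕ} (hn : 1 ≤ n) :
    ‖lacunarySum c m (n * s) - lacunarySum c m ((n + 1) * s)‖ ≤
      (5 + 30 / δ ^ 3) * (m⁻¹ * ((1 + m) / (1 - m))) / n := by
  have hn0 : (0 : ℝ) < n := by exact_mod_cast hn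
  have hcone (x : ℝ) (hx : 0 ≤ x) : δ * ‖(x : ℂ) * s‖ ≤ ((x : ℂ) * s).re :=
    mul_norm_ofReal_mul_le_re hx hs
  have hsum₁ := summable_mulExpNeg_zpow hc hm0 hm1 hδ (hcone n hn0.le)
    (mul_ne_zero (by exact_mod_cast hn0.ne') hs0)
  have hsum₂ := summable_mulExpNeg_zpow hc hm0 hm1 hδ (hcone (n + 1) (by positivity))
    (mul_ne_zero (by norm_cast) hs0)
  simp only [Complex.ofReal_natCast, Complex.ofReal_add, Complex.ofReal_one] at hsum₁ hsum₂
  rw [lacunarySum, lacunarySum, ← hsum₁.tsum_sub hsum₂, div_eq_mul_inv, mul_right_comm,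
    ← div_eq_mul_inv]
  refine (summable_and_norm_tsum_le_of_norm_le_min hm0 hm1 (q := n * (c * ‖s‖))
    (by positivity) (by positivity) fun k => ?_).2
  rw [mul_left_comm _ (n : ℂ), mul_left_comm _ ((n : ℂ) + 1), mul_assoc,
    ← norm_ofReal_mul_zpow_mul hc hm0]
  exact norm_mulExpNeg_nat_mul_sub_le hδ (hcone _ (by positivity)) hn

end lacunarySum

lemma mu_pos {R : ℝ} (hR : 2 < R) : 0 < mu R := by
  have : Real.sqrt (R ^ 2 - 4) < R := (Real.sqrt_lt' (by linarith)).mpr (by nlinarith)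
  unfold mu; linarith

lemma mu_lt_one {R : ℝ} (hR : 2 < R) : mu R < 1 := by
  have : R - 2 < Real.sqrt (R ^ 2 - 4) := (Real.lt_sqrt (by linarith)).mpr (by nlinarith)
  unfold mu; linarith

lemma inv_mu_sub_mu_pos {R : ℝ} (hR : 2 < R) : 0 < (mu R)⁻¹ - mu R :=
  sub_pos.mpr ((mu_lt_one hR).trans ((one_lt_inv₀ (mu_pos hR)).mpr (mu_lt_one hR)))

lemma chi_eq_lacunarySum {R : ℝ} (hR : 2 < R) (s : ℂ) :
    chi R s = (((mu R)⁻¹ - mu R : ℝ) : ℂ)⁻¹ * lacunarySum ((mu R)⁻¹ - mu R) (mu R ^ 4) s := by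
  rw [chi, lacunarySum, ← tsum_mul_left, ← tsum_mul_left]
  congr 1 with k
  have hpow : (mu R : ℂ) ^ (4 * k) = ((mu R ^ 4 : ℝ) : ℂ) ^ k := by
    rw [zpow_mul]; norm_cast
  have hexp : ((mu R : ℂ) - (mu R : ℂ)⁻¹) * (mu R : ℂ) ^ (4 * k) * s =
      -((((mu R)⁻¹ - mu R) * (mu R ^ 4) ^ k : ℝ) * s) := by
    rw [hpow]; push_cast; ring
  have hc : (((mu R)⁻¹ - mu R : ℝ) : ℂ) ≠ 0 := by exact_mod_cast (inv_mu_sub_mu_pos hR).ne'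
  rw [mulExpNeg, hexp, hpow, Complex.ofReal_mul, Complex.ofReal_zpow,
    eq_inv_mul_iff_mul_eq₀ hc]
  ring

/-- Estimate (3.9): `χ(nt) - χ((n+1)t) = O(1/n)` locally uniformly on `Re t > 0`. -/
theorem stmt_17 (R : ℝ) (hR : 2 < R) (K : Set ℂ)
    (hK : K ⊆ {t : ℂ | 0 < t.re}) (hKc : IsCompact K) :
    ∃ C > (0 : ℝ), ∀ n : ℕ, 1 ≤ n → ∀ t ∈ K,
      ‖chi R ((n : ℂ) * t) - chi R (((n : ℂ) + 1) * t)‖ ≤ C / n := by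
  obtain ⟨δ, hδ, hKδ⟩ := hKc.exists_pos_mul_norm_le_re hK
  have hμ0 := mu_pos hR
  have hμ1 := mu_lt_one hR
  set c := (mu R)⁻¹ - mu R
  set m := mu R ^ 4
  have hc : 0 < c := inv_mu_sub_mu_pos hR
  have hm0 : 0 < m := by positivity
  have hm1 : m < 1 := pow_lt_one₀ hμ0.le hμ1 (by norm_num)
  refine ⟨c⁻¹ * ((5 + 30 / δ ^ 3) * (m⁻¹ * ((1 + m) / (1 - m)))), by
    have := sub_pos.mpr hm1; positivity, fun n hn t ht => ?_⟩
  have ht0 : t ≠ 0 := by rintro rfl; simpa using hK ht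
  rw [chi_eq_lacunarySum hR, chi_eq_lacunarySum hR, ← mul_sub, norm_mul, norm_inv,
    Complex.norm_real, Real.norm_of_nonneg hc.le, mul_div_assoc]
  exact mul_le_mul_of_nonneg_left (norm_lacunarySum_sub_le hc hm0 hm1 hδ (hKδ t ht) ht0 hn)
    (inv_nonneg.mpr hc.le)
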